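/- Let ℓ be a prime. An odd prime p with p ≠ ℓ is ℓ-Genocchi regular if and only if p is B-regular and ord_p(ℓ²) = (p−1)/2. -/

import Mathlib

/-- The `ℓ`-Genocchi number `G_{2n} = ℓ(1 - ℓ^{2n})B_{2n}` (an integer). -/
noncomputable def Gnum (ℓ : ℕ) (n : ℕ) : ℚ :=
  (ℓ : ℚ) * (1 - (ℓ : ℚ) ^ (2 * n)) * bernoulli (2 * n)

/-- An odd prime `p` is `B`-irregular if `ν_p(B_{2k}) ≥ 1` for some
`1 ≤ k ≤ (p-3)/2`. -/
def BIrregular (p : ℕ) : Prop :=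
  ∃ k : ℕ, 1 ≤ k ∧ k ≤ (p - 3) / 2 ∧ 1 ≤ padicValRat p (bernoulli (2 * k))

/-- An odd prime `p` is `ℓ`-Genocchi irregular if `p` divides one of
`G_2, G_4, …, G_{p-3}`, i.e. `ν_p(G_{2k}) ≥ 1` for some `1 ≤ k ≤ (p-3)/2`. -/
noncomputable def GenocchiIrregular (ℓ : ℕ) (p : ℕ) : Prop :=
  ∃ k : ℕ, 1 ≤ k ∧ k ≤ (p - 3) / 2 ∧ 1 ≤ padicValRat p (Gnum ℓ k)

/-!
For `1 ≤ k ≤ (p - 3) / 2` all three factors of `G_{2k} = ℓ (1 - ℓ^{2k}) B_{2k}` are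
`p`-integral: `ℓ` is a `p`-adic unit, `1 - ℓ^{2k}` is an integer, and by von Staudt–Clausen `p`
does not divide the denominator of `B_{2k}` because `p - 1 ∤ 2k`. Since `B_{2k} ≠ 0` (it is a
nonzero multiple of `ζ(2k)`), `p ∣ G_{2k}` iff `p ∣ B_{2k}` or `ℓ^{2k} ≡ 1 (mod p)`, i.e.
`ord_p(ℓ²) ∣ k`. As `ord_p(ℓ²)` divides `(p - 1) / 2`, some `k < (p - 1) / 2` is a multiple of it
iff `ord_p(ℓ²) ≠ (p - 1) / 2`.
-/

theorem mul_lt_one_iff_of_le_one {M : Type*} [CommMonoid M] [LinearOrder M] [IsOrderedMonoid M]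
    {a b : M} (ha : a ≤ 1) (hb : b ≤ 1) : a * b < 1 ↔ a < 1 ∨ b < 1 := by
  refine ⟨fun h => ?_, ?_⟩
  · by_contra! h'
    rw [ha.antisymm h'.1, hb.antisymm h'.2, one_mul] at h
    exact h.false
  · rintro (h | h)
    · exact (mul_le_of_le_one_right' hb).trans_lt h
    · exact (mul_le_of_le_one_left' ha).trans_lt h

theorem bernoulli_two_mul_ne_zero {k : ℕ} (hk : k ≠ 0) : bernoulli (2 * k) ≠ 0 := by
  intro h
  have hζ := riemannZeta_two_mul_nat hk
  rw [h] at hζ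
  simp only [Rat.cast_zero, mul_zero, zero_div] at hζ
  exact riemannZeta_ne_zero_of_one_lt_re (by norm_cast; omega) hζ

namespace Rat

variable {p : ℕ} [Fact p.Prime]

theorem one_le_padicValRat_iff_padicValuation_lt_one {x : ℚ} (hx : x ≠ 0) :
    1 ≤ padicValRat p x ↔ Rat.padicValuation p x < 1 := by
  rw [Rat.padicValuation, Valuation.coe_mk, MonoidWithZeroHom.coe_mk, ZeroHom.coe_mk, if_neg hx,
    ← WithZero.exp_zero, WithZero.exp_lt_exp]
  omega

theorem padicValuation_intCast_le_one (z : ℤ) : Rat.padicValuation p z ≤ 1 :=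
  (Rat.padicValuation_cast p z).trans_le (Int.padicValuation_le_one p z)

theorem padicValuation_intCast_lt_one_iff {z : ℤ} : Rat.padicValuation p z < 1 ↔ (p : ℤ) ∣ z :=
  Int.padicValuation_lt_one_iff

theorem padicValuation_natCast_eq_one_iff {n : ℕ} : Rat.padicValuation p n = 1 ↔ ¬ p ∣ n := by
  rw [← Int.cast_natCast, Rat.padicValuation_cast, Int.padicValuation_eq_one_iff,
    Int.natCast_dvd_natCast]

theorem padicValuation_bernoulli_two_mul_le_one {k : ℕ} (hk : ¬ (p - 1) ∣ 2 * k) :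
    Rat.padicValuation p (bernoulli (2 * k)) ≤ 1 := by
  obtain ⟨z, hz⟩ := Bernoulli.vonStaudt_clausen k
  rw [eq_sub_of_add_eq hz.symm]
  refine (Valuation.map_sub _ _ _).trans (max_le (padicValuation_intCast_le_one z) ?_)
  refine Valuation.map_sum_le _ fun q hq => ?_
  obtain ⟨-, hq, hqk⟩ := Finset.mem_filter.mp hq
  have hpq : ¬ p ∣ q := fun h => hk ((Nat.prime_dvd_prime_iff_eq Fact.out hq).mp h ▸ hqk)
  rw [one_div, map_inv₀, padicValuation_natCast_eq_one_iff.mpr hpq, inv_one]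

end Rat

open Rat in
theorem one_le_padicValRat_Gnum_iff {ℓ p k : ℕ} [Fact p.Prime] (hℓ : 2 ≤ ℓ) (hpℓ : ¬ p ∣ ℓ)
    (hk : k ≠ 0) (hpk : ¬ (p - 1) ∣ 2 * k) :
    1 ≤ padicValRat p (Gnum ℓ k) ↔
      1 ≤ padicValRat p (bernoulli (2 * k)) ∨ orderOf ((ℓ : ZMod p) ^ 2) ∣ k := by
  have hA : (1 - (ℓ : ℤ) ^ (2 * k) : ℤ) ≠ 0 := by
    have : 1 < (ℓ : ℤ) ^ (2 * k) := one_lt_pow₀ (by omega) (by omega)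
    omega
  have hB := bernoulli_two_mul_ne_zero hk
  have hG : Gnum ℓ k ≠ 0 := by
    unfold Gnum
    exact mul_ne_zero (mul_ne_zero (by positivity) (by exact_mod_cast hA)) hB
  have hA_cast : (1 - (ℓ : ℚ) ^ (2 * k)) = ((1 - (ℓ : ℤ) ^ (2 * k) : ℤ) : ℚ) := by push_cast; rfl
  have hA_dvd : (p : ℤ) ∣ 1 - (ℓ : ℤ) ^ (2 * k) ↔ orderOf ((ℓ : ZMod p) ^ 2) ∣ k := by
    rw [orderOf_dvd_iff_pow_eq_one, ← pow_mul, ← ZMod.intCast_zmod_eq_zero_iff_dvd]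
    push_cast
    rw [sub_eq_zero, eq_comm]
  rw [one_le_padicValRat_iff_padicValuation_lt_one hG,
    one_le_padicValRat_iff_padicValuation_lt_one hB, Gnum, map_mul, map_mul,
    padicValuation_natCast_eq_one_iff.mpr hpℓ, one_mul, hA_cast,
    mul_lt_one_iff_of_le_one (padicValuation_intCast_le_one _)
      (padicValuation_bernoulli_two_mul_le_one hpk),
    padicValuation_intCast_lt_one_iff, hA_dvd, or_comm]

theorem Nat.exists_pos_lt_dvd_iff {d n : ℕ} : (∃ k, 0 < k ∧ k < n ∧ d ∣ k) ↔ 0 < d ∧ d < n :=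
  ⟨fun ⟨k, hk, hkn, hdk⟩ => have := Nat.le_of_dvd hk hdk; ⟨Nat.pos_of_dvd_of_pos hdk hk, by omega⟩,
    fun ⟨hd, hdn⟩ => ⟨d, hd, hdn, dvd_rfl⟩⟩

theorem ZMod.orderOf_sq_dvd_card_sub_one_div_two {p : ℕ} [Fact p.Prime] (hp : Odd p) {a : ZMod p}
    (ha : a ≠ 0) : orderOf (a ^ 2) ∣ (p - 1) / 2 := by
  obtain ⟨t, rfl⟩ := hp
  rw [orderOf_dvd_iff_pow_eq_one, ← pow_mul,
    show 2 * ((2 * t + 1 - 1) / 2) = 2 * t + 1 - 1 by omega]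
  exact ZMod.pow_card_sub_one_eq_one ha

/-- Let `ℓ` be a prime. An odd prime `p ≠ ℓ` is `ℓ`-Genocchi regular iff `p` is
`B`-regular and `ord_p(ℓ²) = (p-1)/2`. -/
theorem GenocchiRegular_iff (ℓ p : ℕ) (hℓ : ℓ.Prime) (hp : p.Prime)
    (hodd : Odd p) (hne : p ≠ ℓ) :
    ¬ GenocchiIrregular ℓ p ↔
      ¬ BIrregular p ∧ orderOf ((ℓ : ZMod p) ^ 2) = (p - 1) / 2 := by
  have : Fact p.Prime := ⟨hp⟩
  have hp3 : 3 ≤ p := by obtain ⟨t, rfl⟩ := hodd; have := hp.two_le; omega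
  have hpℓ : ¬ p ∣ ℓ := fun h => hne ((Nat.prime_dvd_prime_iff_eq hp hℓ).mp h)
  set d := orderOf ((ℓ : ZMod p) ^ 2)
  have hd : d ∣ (p - 1) / 2 :=
    ZMod.orderOf_sq_dvd_card_sub_one_div_two hodd (by rwa [Ne, ZMod.natCast_eq_zero_iff])
  have hGI : GenocchiIrregular ℓ p ↔ BIrregular p ∨ ∃ k, 0 < k ∧ k < (p - 1) / 2 ∧ d ∣ k := by
    rw [GenocchiIrregular, BIrregular, ← exists_or]
    refine exists_congr fun k => ?_
    by_cases hk : 1 ≤ k ∧ k ≤ (p - 3) / 2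
    · rw [one_le_padicValRat_Gnum_iff hℓ.two_le hpℓ (by omega)
        (Nat.not_dvd_of_pos_of_lt (by omega) (by omega))]
      grind
    · grind
  have hd_pos : 0 < d := Nat.pos_of_dvd_of_pos hd (by omega)
  have hd_le : d ≤ (p - 1) / 2 := Nat.le_of_dvd (by omega) hd
  rw [hGI, not_or, Nat.exists_pos_lt_dvd_iff]
  exact and_congr_right fun _ => by omega
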